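/- arXiv:2106.01697 — 11 statements merged into one kernel-verified Lean document; each statement's English description precedes it below -/
import Mathlib

section
/- Let (X, ≠q) be a quantum set. The following are equivalent: (i) (X, ≠q) is hereditary; (ii) for all S, T ∈ 𝒬(X) with S ⊆ T and T ∩ Sᶜ = ∅, one has S = T; (iii) 𝒬(X) satisfies the orthomodular law: for all S, T ∈ 𝒬(X) with S ⊆ T, one has T = (S ∪ (T ∩ Sᶜ))ᶜᶜ. -/
/-- The q-complement of a subset `D` with respect to a relation `q`. -/
def qCompl {X : Type*} (q : X → X → Prop) (D : Set X) : Set X :=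
  {y | ∀ z ∈ D, q y z}

/-- The collection of q-subsets of a quantum set. -/
def qSubsets {X : Type*} (q : X → X → Prop) : Set (Set X) :=
  {S | S = qCompl q (qCompl q S)}

/-- A quantum set is hereditary if for every q-subset `T`, the q-subsets of `X`
contained in `T` are exactly the q-subsets of `T` for the restricted relation. -/
def Hereditary {X : Type*} (q : X → X → Prop) : Prop :=
  ∀ T ∈ qSubsets q, ∀ S : Set X,
    (S ∈ qSubsets q ∧ S ⊆ T) ↔ (S ⊆ T ∧ S = qCompl q (qCompl q S ∩ T) ∩ T)

section Aux

variable {X : Type*} (q : X → X → Prop)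

lemma qCompl_anti {A B : Set X} (h : A ⊆ B) : qCompl q B ⊆ qCompl q A :=
  fun y hy z hz => hy z (h hz)

lemma subset_qCompl_qCompl (hsymm : ∀ x y, q x y → q y x) (D : Set X) :
    D ⊆ qCompl q (qCompl q D) :=
  fun x hx z hz => hsymm _ _ (hz x hx)

lemma qCompl_mem (hsymm : ∀ x y, q x y → q y x) (D : Set X) :
    qCompl q D ∈ qSubsets q :=
  Set.Subset.antisymm (subset_qCompl_qCompl q hsymm _)
    (qCompl_anti q (subset_qCompl_qCompl q hsymm D))

lemma qCompl_union (A B : Set X) :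
    qCompl q (A ∪ B) = qCompl q A ∩ qCompl q B := by
  ext x
  simp only [qCompl, Set.mem_setOf_eq, Set.mem_union, Set.mem_inter_iff]
  constructor
  · intro h; exact ⟨fun z hz => h z (Or.inl hz), fun z hz => h z (Or.inr hz)⟩
  · rintro ⟨h1, h2⟩ z (hz | hz)
    · exact h1 z hz
    · exact h2 z hz

lemma qCompl_empty : qCompl q (∅ : Set X) = Set.univ := by
  ext x; simp [qCompl]

lemma not_mem_self_qCompl (hne : ∀ x y, q x y → x ≠ y) {D : Set X} {x : X}
    (hx : x ∈ D) (hx' : x ∈ qCompl q D) : False :=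
  hne x x (hx' x hx) rfl

/-- The key intersection is a q-subset. -/
lemma inter_mem (hsymm : ∀ x y, q x y → q y x) {T : Set X}
    (hT : T ∈ qSubsets q) (A : Set X) :
    qCompl q A ∩ T ∈ qSubsets q := by
  have hT' : T = qCompl q (qCompl q T) := hT
  rw [hT', ← qCompl_union]
  exact qCompl_mem q hsymm _

end Aux

/-- For a quantum set `(X, q)`, the following are equivalent: (i) `(X, q)` is
hereditary; (ii) for all q-subsets `S ⊆ T` with `T ∩ Sᶜ = ∅` one has `S = T`;
(iii) the ortholattice `𝒬(X)` satisfies the orthomodular law. -/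
theorem hereditary_iff_orthomodular {X : Type*} (q : X → X → Prop)
    (hsymm : ∀ x y, q x y → q y x) (hne : ∀ x y, q x y → x ≠ y) :
    (Hereditary q ↔
      ∀ S ∈ qSubsets q, ∀ T ∈ qSubsets q,
        S ⊆ T → T ∩ qCompl q S = ∅ → S = T) ∧
    (Hereditary q ↔
      ∀ S ∈ qSubsets q, ∀ T ∈ qSubsets q,
        S ⊆ T → T = qCompl q (qCompl q (S ∪ (T ∩ qCompl q S)))) := by
  -- (i) → (ii)
  have h12 : Hereditary q →
      ∀ S ∈ qSubsets q, ∀ T ∈ qSubsets q,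
        S ⊆ T → T ∩ qCompl q S = ∅ → S = T := by
    intro h S hS T hT hST hdisj
    have heq := ((h T hT S).mp ⟨hS, hST⟩).2
    have h0 : qCompl q S ∩ T = ∅ := by rwa [Set.inter_comm] at hdisj
    rw [h0, qCompl_empty, Set.univ_inter] at heq
    exact heq
  -- (ii) → (i)
  have h21 : (∀ S ∈ qSubsets q, ∀ T ∈ qSubsets q,
        S ⊆ T → T ∩ qCompl q S = ∅ → S = T) → Hereditary q := by
    intro hii T hT S
    constructor
    · rintro ⟨hS, hST⟩
      refine ⟨hST, ?_⟩
      set V := qCompl q (qCompl q S ∩ T) ∩ T with hVdef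
      have hV : V ∈ qSubsets q := inter_mem q hsymm hT _
      have hSV : S ⊆ V := by
        intro x hx
        refine ⟨?_, hST hx⟩
        have hx' : x ∈ qCompl q (qCompl q S) := hS ▸ hx
        exact qCompl_anti q Set.inter_subset_left hx'
      have hdisj : V ∩ qCompl q S = ∅ := by
        ext x
        simp only [Set.mem_inter_iff, Set.mem_empty_iff_false, iff_false, not_and]
        rintro ⟨hx1, hx2⟩ hx3
        exact not_mem_self_qCompl q hne (⟨hx3, hx2⟩ : x ∈ qCompl q S ∩ T) hx1
      exact hii S hS V hV hSV hdisj
    · rintro ⟨hST, heq⟩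
      refine ⟨?_, hST⟩
      have hV : qCompl q (qCompl q S ∩ T) ∩ T ∈ qSubsets q := inter_mem q hsymm hT _
      rw [heq]
      exact hV
  -- (ii) → (iii)
  have h23 : (∀ S ∈ qSubsets q, ∀ T ∈ qSubsets q,
        S ⊆ T → T ∩ qCompl q S = ∅ → S = T) →
      ∀ S ∈ qSubsets q, ∀ T ∈ qSubsets q,
        S ⊆ T → T = qCompl q (qCompl q (S ∪ (T ∩ qCompl q S))) := by
    intro hii S hS T hT hST
    set A := S ∪ (T ∩ qCompl q S) with hAdef
    set U := qCompl q (qCompl q A) with hUdef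
    have hU : U ∈ qSubsets q := qCompl_mem q hsymm _
    have hAT : A ⊆ T := by
      rintro x (hx | hx)
      · exact hST hx
      · exact hx.1
    have hUT : U ⊆ T := by
      have h1 : qCompl q T ⊆ qCompl q A := qCompl_anti q hAT
      have h2 : U ⊆ qCompl q (qCompl q T) := qCompl_anti q h1
      rw [← hT] at h2
      exact h2
    have hcU : qCompl q U = qCompl q A := by
      have := qCompl_mem q hsymm A
      exact this.symm
    have hdisj : T ∩ qCompl q U = ∅ := by
      ext x
      simp only [Set.mem_inter_iff, Set.mem_empty_iff_false, iff_false, not_and]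
      intro hxT hxU
      rw [hcU, hAdef, qCompl_union] at hxU
      obtain ⟨hx1, hx2⟩ := hxU
      exact not_mem_self_qCompl q hne (⟨hxT, hx1⟩ : x ∈ T ∩ qCompl q S) hx2
    exact (hii U hU T hT hUT hdisj).symm
  -- (iii) → (ii)
  have h32 : (∀ S ∈ qSubsets q, ∀ T ∈ qSubsets q,
        S ⊆ T → T = qCompl q (qCompl q (S ∪ (T ∩ qCompl q S)))) →
      ∀ S ∈ qSubsets q, ∀ T ∈ qSubsets q,
        S ⊆ T → T ∩ qCompl q S = ∅ → S = T := by
    intro hiii S hS T hT hST hdisj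
    have h := hiii S hS T hT hST
    rw [hdisj, Set.union_empty, ← hS] at h
    exact h.symm
  exact ⟨⟨h12, h21⟩, ⟨fun h => h23 (h12 h), fun h => h21 (h32 h)⟩⟩
end

section
/- Let L be an ortholattice, L* := L \ {0}, and define p ≠_L q iff p ≤ q' for p, q ∈ L*. Then ≠_L is a q-distinctness relation on L* (symmetric, and p ≠_L q implies p ≠ q), and the map Ξ⁰ defined by Ξ⁰(p) := {q ∈ L* : q ≤ p} is an injective ortholattice homomorphism from L into 𝒬(L*, ≠_L): for all p, q ∈ L, Ξ⁰(p) ∈ 𝒬(L*), Ξ⁰(p') = Ξ⁰(p)ᶜ, Ξ⁰(p ∧ q) = Ξ⁰(p) ∩ Ξ⁰(q), and p ≤ q if and only if Ξ⁰(p) ⊆ Ξ⁰(q). -/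
/-- Let `L` be an ortholattice with orthocomplementation `oc`, let `L* = L \ {0}` and
define `p ≠_L q` iff `p ≤ oc q`. Then `≠_L` is a q-distinctness relation on `L*`, and
`Ξ⁰(p) = {q ∈ L* : q ≤ p}` is an injective ortholattice homomorphism from `L` into
`𝒬(L*, ≠_L)`. -/
theorem ortholattice_embeds_in_qSubsets {L : Type*} [Lattice L] [BoundedOrder L]
    (oc : L → L) (oc_invol : ∀ p, oc (oc p) = p) (oc_inf : ∀ p, p ⊓ oc p = ⊥)
    (oc_anti : ∀ p q : L, q ≤ p → oc p ≤ oc q) :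
    (∀ p q : {p : L // p ≠ ⊥}, (p : L) ≤ oc q → (q : L) ≤ oc p) ∧
    (∀ p q : {p : L // p ≠ ⊥}, (p : L) ≤ oc q → p ≠ q) ∧
    (∀ p : L, ({q : {p : L // p ≠ ⊥} | (q : L) ≤ p}
      ∈ qSubsets (fun p q : {p : L // p ≠ ⊥} => (p : L) ≤ oc q))) ∧
    (∀ p : L, {q : {p : L // p ≠ ⊥} | (q : L) ≤ oc p}
      = qCompl (fun p q : {p : L // p ≠ ⊥} => (p : L) ≤ oc q)
          {q : {p : L // p ≠ ⊥} | (q : L) ≤ p}) ∧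
    (∀ p q : L, {r : {p : L // p ≠ ⊥} | (r : L) ≤ p ⊓ q}
      = {r : {p : L // p ≠ ⊥} | (r : L) ≤ p} ∩ {r : {p : L // p ≠ ⊥} | (r : L) ≤ q}) ∧
    (∀ p q : L, p ≤ q ↔
      {r : {p : L // p ≠ ⊥} | (r : L) ≤ p} ⊆ {r : {p : L // p ≠ ⊥} | (r : L) ≤ q}) := by
  have oc_top : oc ⊤ = ⊥ := by
    have := oc_inf ⊤; simpa using this
  have oc_bot : oc ⊥ = ⊤ := by
    rw [← oc_top, oc_invol]
  -- symmetry
  have sym : ∀ p q : {p : L // p ≠ ⊥}, (p : L) ≤ oc q → (q : L) ≤ oc p := by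
    intro p q h
    have := oc_anti _ _ h
    rw [oc_invol] at this
    exact this
  -- key complement lemma
  have compl : ∀ p : L, {q : {p : L // p ≠ ⊥} | (q : L) ≤ oc p}
      = qCompl (fun p q : {p : L // p ≠ ⊥} => (p : L) ≤ oc q)
          {q : {p : L // p ≠ ⊥} | (q : L) ≤ p} := by
    intro p
    ext y
    constructor
    · intro hy z hz
      exact le_trans hy (oc_anti _ _ hz)
    · intro hy
      by_cases hp : p = ⊥
      · subst hp; rw [oc_bot]; exact le_top
      · exact hy ⟨p, hp⟩ (le_refl p)
  refine ⟨sym, ?_, ?_, compl, ?_, ?_⟩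
  · intro p q h heq
    subst heq
    have : (p : L) ≤ (p : L) ⊓ oc p := le_inf le_rfl h
    rw [oc_inf] at this
    exact p.2 (le_bot_iff.mp this)
  · intro p
    show _ = _
    have h1 := compl p
    have h2 := compl (oc p)
    rw [oc_invol] at h2
    rw [h1] at h2
    exact h2
  · intro p q
    ext r
    simp [Set.mem_setOf_eq, le_inf_iff, Set.mem_inter_iff]
  · intro p q
    constructor
    · intro h r hr
      exact le_trans hr h
    · intro h
      by_cases hp : p = ⊥
      · subst hp; exact bot_le
      · exact h (show (⟨p, hp⟩ : {p : L // p ≠ ⊥}).1 ≤ p from le_rfl)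
end

section
/- Let L be a complete ortholattice, L* := L \ {0}, with p ≠_L q iff p ≤ q'. Then the map Ξ⁰(p) := {q ∈ L* : q ≤ p} is a bijection from L onto 𝒬(L*, ≠_L); in particular, every q-subset of (L*, ≠_L) is of the form {q ∈ L* : q ≤ p} for a unique p ∈ L. -/
/-- Let `L` be a complete ortholattice, `L* = L \ {0}` with `p ≠_L q` iff `p ≤ oc q`.
Then `Ξ⁰(p) = {q ∈ L* : q ≤ p}` is a bijection from `L` onto `𝒬(L*, ≠_L)`; in
particular every q-subset of `(L*, ≠_L)` is of the form `{q ∈ L* : q ≤ p}` for a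
unique `p ∈ L`. -/
theorem complete_ortholattice_qSubsets_bijection {L : Type*} [CompleteLattice L]
    (oc : L → L) (oc_invol : ∀ p, oc (oc p) = p) (oc_inf : ∀ p, p ⊓ oc p = ⊥)
    (oc_anti : ∀ p q : L, q ≤ p → oc p ≤ oc q) :
    (∀ p : L, {q : {p : L // p ≠ ⊥} | (q : L) ≤ p}
      ∈ qSubsets (fun p q : {p : L // p ≠ ⊥} => (p : L) ≤ oc q)) ∧
    (Function.Injective fun p : L => {q : {p : L // p ≠ ⊥} | (q : L) ≤ p}) ∧
    (∀ S ∈ qSubsets (fun p q : {p : L // p ≠ ⊥} => (p : L) ≤ oc q),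
      ∃! p : L, S = {q : {p : L // p ≠ ⊥} | (q : L) ≤ p}) := by
  set Q : {p : L // p ≠ ⊥} → {p : L // p ≠ ⊥} → Prop :=
    fun p q => (p : L) ≤ oc q with hQ
  set Xi : L → Set {p : L // p ≠ ⊥} := fun p => {q | (q : L) ≤ p} with hXi
  -- key lemma: y ≤ oc (sSup S) ↔ ∀ z ∈ S, y ≤ oc z
  have keyA : ∀ (S : Set L) (y : L), (∀ z ∈ S, y ≤ oc z) ↔ y ≤ oc (sSup S) := by
    intro S y
    constructor
    · intro h
      have h2 : sSup S ≤ oc y := by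
        apply sSup_le
        intro z hz
        have := oc_anti _ _ (h z hz)
        rwa [oc_invol] at this
      have := oc_anti _ _ h2
      rwa [oc_invol] at this
    · intro h z hz
      exact h.trans (oc_anti _ _ (le_sSup hz))
  -- every p is the sup of its nonzero lower bounds
  have keyB : ∀ p : L, sSup {z : L | z ≠ ⊥ ∧ z ≤ p} = p := by
    intro p
    apply le_antisymm
    · exact sSup_le fun z hz => hz.2
    · rcases eq_or_ne p ⊥ with rfl | hp
      · exact bot_le
      · exact le_sSup ⟨hp, le_rfl⟩
  -- qCompl of Xi p is Xi (oc p)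
  have keyC : ∀ p : L, qCompl Q (Xi p) = Xi (oc p) := by
    intro p
    ext ⟨y, hy⟩
    simp only [qCompl, hXi, hQ, Set.mem_setOf_eq]
    constructor
    · intro h
      have : ∀ z ∈ {z : L | z ≠ ⊥ ∧ z ≤ p}, y ≤ oc z := by
        intro z hz
        exact h ⟨z, hz.1⟩ hz.2
      rw [keyA] at this
      rwa [keyB p] at this
    · intro h z hz
      exact h.trans (oc_anti _ _ hz)
  have inj : Function.Injective Xi := by
    intro p q h
    have hle : ∀ a b : L, Xi a = Xi b → a ≤ b := by
      intro a b hab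
      rw [← keyB a]
      apply sSup_le
      intro z hz
      have : (⟨z, hz.1⟩ : {p : L // p ≠ ⊥}) ∈ Xi a := hz.2
      rw [hab] at this
      exact this
    exact le_antisymm (hle _ _ h) (hle _ _ h.symm)
  refine ⟨?_, inj, ?_⟩
  · intro p
    show Xi p = qCompl Q (qCompl Q (Xi p))
    rw [keyC, keyC, oc_invol]
  · intro S hS
    have hSq : S = qCompl Q (qCompl Q S) := hS
    -- qCompl S = Xi (oc (sSup of coercions of S))
    have hC : qCompl Q S = Xi (oc (sSup (Subtype.val '' S))) := by
      ext ⟨y, hy⟩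
      simp only [qCompl, hXi, hQ, Set.mem_setOf_eq]
      rw [← keyA]
      constructor
      · rintro h z ⟨w, hw, rfl⟩
        exact h w hw
      · intro h z hz
        exact h z ⟨z, hz, rfl⟩
    have hSeq : S = Xi (sSup (Subtype.val '' S)) := by
      conv_lhs => rw [hSq]
      rw [hC, keyC, oc_invol]
    exact ⟨sSup (Subtype.val '' S), hSeq, fun p hp => (inj (hSeq.symm.trans hp) : _ = p).symm⟩
end

section
/- Let L be a complete ortholattice, L* := L \ {0}, with p ≠_L q iff p ≤ q'. Then L is orthomodular (for all p ≤ q in L one has q = p ∨ (q ∧ p')) if and only if the quantum set (L*, ≠_L) is hereditary. -/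
namespace OMHaux

variable {L : Type*} [CompleteLattice L]

/-- Down-sets in `L \ {⊥}`. -/
def Dset (a : L) : Set {p : L // p ≠ ⊥} := {x | (x : L) ≤ a}

/-- Supremum of a set in `L \ {⊥}`, computed in `L`. -/
def supX (S : Set {p : L // p ≠ ⊥}) : L := sSup ((↑) '' S)

lemma supX_Dset (a : L) : supX (Dset a) = a := by
  apply le_antisymm
  · apply sSup_le
    rintro x ⟨y, hy, rfl⟩
    exact hy
  · by_cases h : a = ⊥
    · simp [h]
    · exact le_sSup ⟨⟨a, h⟩, le_rfl, rfl⟩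

lemma Dset_inter (a b : L) : Dset (L := L) a ∩ Dset b = Dset (a ⊓ b) := by
  ext x
  simp only [Dset, Set.mem_inter_iff, Set.mem_setOf_eq, le_inf_iff]

lemma Dset_mono {a b : L} (h : a ≤ b) : Dset (L := L) a ⊆ Dset b :=
  fun _ hx => le_trans hx h

variable (oc : L → L)

lemma le_oc_comm (oc_invol : ∀ p, oc (oc p) = p)
    (oc_anti : ∀ p q : L, q ≤ p → oc p ≤ oc q) {p q : L} (h : p ≤ oc q) : q ≤ oc p := by
  have := oc_anti _ _ h
  rwa [oc_invol] at this

lemma qCompl_eq (oc_invol : ∀ p, oc (oc p) = p)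
    (oc_anti : ∀ p q : L, q ≤ p → oc p ≤ oc q) (D : Set {p : L // p ≠ ⊥}) :
    qCompl (fun p q : {p : L // p ≠ ⊥} => (p : L) ≤ oc q) D = Dset (oc (supX D)) := by
  ext x
  simp only [qCompl, Set.mem_setOf_eq, Dset]
  constructor
  · intro h
    apply le_oc_comm oc oc_invol oc_anti
    apply sSup_le
    rintro _ ⟨z, hz, rfl⟩
    exact le_oc_comm oc oc_invol oc_anti (h z hz)
  · intro h z hz
    have h1 : (z : L) ≤ supX D := le_sSup ⟨z, hz, rfl⟩
    exact le_oc_comm oc oc_invol oc_anti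
      (h1.trans (le_oc_comm oc oc_invol oc_anti h))

lemma Dset_mem_qSubsets (oc_invol : ∀ p, oc (oc p) = p)
    (oc_anti : ∀ p q : L, q ≤ p → oc p ≤ oc q) (a : L) :
    Dset a ∈ qSubsets (fun p q : {p : L // p ≠ ⊥} => (p : L) ≤ oc q) := by
  show Dset a = _
  simp only [qCompl_eq oc oc_invol oc_anti, supX_Dset, oc_invol]

lemma qsubset_eq (oc_invol : ∀ p, oc (oc p) = p)
    (oc_anti : ∀ p q : L, q ≤ p → oc p ≤ oc q) {S : Set {p : L // p ≠ ⊥}}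
    (hS : S ∈ qSubsets (fun p q : {p : L // p ≠ ⊥} => (p : L) ≤ oc q)) :
    S = Dset (supX S) := by
  have h : S = qCompl _ (qCompl _ S) := hS
  conv_lhs => rw [h]
  simp only [qCompl_eq oc oc_invol oc_anti, supX_Dset, oc_invol]

/-- De Morgan: `oc (oc x ⊓ oc y) = x ⊔ y`. -/
lemma oc_inf_oc (oc_invol : ∀ p, oc (oc p) = p)
    (oc_anti : ∀ p q : L, q ≤ p → oc p ≤ oc q) (x y : L) : oc (oc x ⊓ oc y) = x ⊔ y := by
  apply le_antisymm
  · have h1 : oc (x ⊔ y) ≤ oc x ⊓ oc y :=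
      le_inf (oc_anti _ _ le_sup_left) (oc_anti _ _ le_sup_right)
    have h2 := oc_anti _ _ h1
    rwa [oc_invol] at h2
  · apply sup_le
    · have := oc_anti _ _ (inf_le_left : oc x ⊓ oc y ≤ oc x)
      rwa [oc_invol] at this
    · have := oc_anti _ _ (inf_le_right : oc x ⊓ oc y ≤ oc y)
      rwa [oc_invol] at this

/-- Orthomodularity implies the key identity. -/
lemma om_imp (oc_invol : ∀ p, oc (oc p) = p)
    (oc_anti : ∀ p q : L, q ≤ p → oc p ≤ oc q) (oc_inf : ∀ p, p ⊓ oc p = ⊥)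
    (hom : ∀ p q : L, p ≤ q → q = p ⊔ (q ⊓ oc p)) {s t : L} (h : s ≤ t) :
    oc (oc s ⊓ t) ⊓ t = s := by
  set u := oc (oc s ⊓ t) ⊓ t with hu
  have hsu : s ≤ u := by
    apply le_inf _ h
    have := oc_anti _ _ (inf_le_left : oc s ⊓ t ≤ oc s)
    rwa [oc_invol] at this
  have hub : u ⊓ oc s = ⊥ := by
    apply le_antisymm _ bot_le
    have h1 : u ⊓ oc s ≤ (oc s ⊓ t) ⊓ oc (oc s ⊓ t) :=
      le_inf (le_inf inf_le_right (le_trans inf_le_left inf_le_right))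
        (le_trans inf_le_left inf_le_left)
    rwa [oc_inf (oc s ⊓ t)] at h1
  have h3 := hom s u hsu
  rw [hub, sup_bot_eq] at h3
  exact h3

/-- The key identity implies orthomodularity. -/
lemma imp_om (oc_invol : ∀ p, oc (oc p) = p)
    (oc_anti : ∀ p q : L, q ≤ p → oc p ≤ oc q) (h' : ∀ s t : L, s ≤ t → oc (oc s ⊓ t) ⊓ t = s)
    (p q : L) (hpq : p ≤ q) : q = p ⊔ (q ⊓ oc p) := by
  have h1 := h' (oc q) (oc p) (oc_anti _ _ hpq)
  rw [oc_invol] at h1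
  have h2 := congrArg oc h1
  rw [oc_inf_oc oc oc_invol oc_anti (q ⊓ oc p) p, oc_invol] at h2
  exact h2.symm.trans (sup_comm _ _)

end OMHaux

open OMHaux in
/-- Let `L` be a complete ortholattice, `L* = L \ {0}` with `p ≠_L q` iff `p ≤ oc q`.
Then `L` is orthomodular if and only if the quantum set `(L*, ≠_L)` is hereditary. -/
theorem orthomodular_iff_hereditary {L : Type*} [CompleteLattice L]
    (oc : L → L) (oc_invol : ∀ p, oc (oc p) = p) (oc_inf : ∀ p, p ⊓ oc p = ⊥)
    (oc_anti : ∀ p q : L, q ≤ p → oc p ≤ oc q) :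
    (∀ p q : L, p ≤ q → q = p ⊔ (q ⊓ oc p)) ↔
      Hereditary (fun p q : {p : L // p ≠ ⊥} => (p : L) ≤ oc q) := by
  constructor
  · -- orthomodular → hereditary
    intro hom T hT S
    have hTD : T = Dset (supX T) := qsubset_eq oc oc_invol oc_anti hT
    set t := supX T with ht
    constructor
    · rintro ⟨hS, hST⟩
      refine ⟨hST, ?_⟩
      have hSD : S = Dset (supX S) := qsubset_eq oc oc_invol oc_anti hS
      set s := supX S with hs
      have hst : s ≤ t := by
        apply sSup_le
        rintro _ ⟨x, hx, rfl⟩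
        rw [hTD] at hST
        exact hST hx
      rw [hSD, hTD]
      simp only [qCompl_eq oc oc_invol oc_anti, supX_Dset, Dset_inter]
      rw [om_imp oc oc_invol oc_anti oc_inf hom hst]
    · rintro ⟨hST, hSeq⟩
      refine ⟨?_, hST⟩
      rw [hSeq, hTD]
      simp only [qCompl_eq oc oc_invol oc_anti, supX_Dset, Dset_inter]
      exact Dset_mem_qSubsets oc oc_invol oc_anti _
  · -- hereditary → orthomodular
    intro H
    apply imp_om oc oc_invol oc_anti
    intro s t hst
    have hT := Dset_mem_qSubsets (L := L) oc oc_invol oc_anti t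
    have h1 := (H (Dset t) hT (Dset s)).mp
      ⟨Dset_mem_qSubsets oc oc_invol oc_anti s, Dset_mono hst⟩
    have h2 := h1.2
    simp only [qCompl_eq oc oc_invol oc_anti, supX_Dset, Dset_inter] at h2
    have h3 := congrArg supX h2
    simp only [supX_Dset] at h3
    exact h3.symm
end

section
/- Let M and L be ortholattices, and suppose Φ : M \ {0} → L \ {0} is a bijection such that for all p, q ∈ M \ {0}, p ≤ q' if and only if Φ(p) ≤ Φ(q)'. Then M and L are isomorphic as ortholattices: there is a bijection θ : M → L such that p ≤ q iff θ(p) ≤ θ(q) for all p, q ∈ M, θ(p') = θ(p)' for all p ∈ M, and θ(p) = Φ(p')' whenever p ∈ M with p ≠ 0 and p ≠ 1. -/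
/-- Let `M` and `L` be ortholattices and `Φ : M \ {0} → L \ {0}` a bijection such
that `p ≤ q'` iff `Φ(p) ≤ Φ(q)'`. Then `M` and `L` are isomorphic as ortholattices,
via a bijection `θ` which is an order isomorphism preserving orthocomplements and
satisfies `θ(p) = Φ(p')'` whenever `p ≠ 0` and `p ≠ 1`. -/
theorem strict_quantum_bijection_induces_ortholattice_iso
    {M L : Type*} [Lattice M] [BoundedOrder M] [Lattice L] [BoundedOrder L]
    (ocM : M → M) (ocM_invol : ∀ p, ocM (ocM p) = p) (ocM_inf : ∀ p, p ⊓ ocM p = ⊥)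
    (ocM_anti : ∀ p q : M, q ≤ p → ocM p ≤ ocM q)
    (ocL : L → L) (ocL_invol : ∀ p, ocL (ocL p) = p) (ocL_inf : ∀ p, p ⊓ ocL p = ⊥)
    (ocL_anti : ∀ p q : L, q ≤ p → ocL p ≤ ocL q)
    (Φ : {p : M // p ≠ ⊥} → {p : L // p ≠ ⊥}) (hΦ : Function.Bijective Φ)
    (horth : ∀ p q : {p : M // p ≠ ⊥}, (p : M) ≤ ocM q ↔ (Φ p : L) ≤ ocL (Φ q)) :
    ∃ θ : M → L, Function.Bijective θ ∧
      (∀ p q : M, p ≤ q ↔ θ p ≤ θ q) ∧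
      (∀ p : M, θ (ocM p) = ocL (θ p)) ∧
      (∀ (p : M) (h : ocM p ≠ ⊥), p ≠ ⊥ → p ≠ ⊤ →
        θ p = ocL (Φ ⟨ocM p, h⟩ : L)) := by
  classical
  by_cases htriv : (⊤ : M) = ⊥
  · -- trivial case: M (hence L) is a subsingleton
    have hM : ∀ p : M, p = ⊥ := fun p => le_antisymm (le_top.trans htriv.le) bot_le
    have hL : ∀ y : L, y = ⊥ := by
      intro y
      by_contra hy
      obtain ⟨x, -⟩ := hΦ.2 ⟨y, hy⟩
      exact x.2 (hM x.1)
    refine ⟨fun _ => ⊥, ⟨fun p q _ => (hM p).trans (hM q).symm,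
      fun y => ⟨⊥, (hL y).symm⟩⟩, ?_, ?_, ?_⟩
    · intro p q
      constructor
      · intro _; exact le_rfl
      · intro _; rw [hM p]; exact bot_le
    · intro p; rw [hL (ocL ⊥)]
    · intro p h _ _; exact absurd (hM (ocM p)) h
  · -- main case
    have hMocbot : ocM ⊥ = ⊤ := by
      refine le_antisymm le_top ?_
      have h1 := ocM_anti (ocM ⊤) ⊥ bot_le
      rw [ocM_invol] at h1
      exact h1
    have hMtop : ∀ p : M, ocM p = ⊥ → p = ⊤ := by
      intro p hp
      rw [← ocM_invol p, hp, hMocbot]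
    have hMoctop : ocM ⊤ = ⊥ := by
      have := ocM_inf ⊤
      rwa [top_inf_eq] at this
    have hLocbot : ocL ⊥ = ⊤ := by
      refine le_antisymm le_top ?_
      have h1 := ocL_anti (ocL ⊤) ⊥ bot_le
      rw [ocL_invol] at h1
      exact h1
    have hLtop : ∀ p : L, ocL p = ⊥ → p = ⊤ := by
      intro p hp
      rw [← ocL_invol p, hp, hLocbot]
    have hLoctop : ocL ⊤ = ⊥ := by
      have := ocL_inf ⊤
      rwa [top_inf_eq] at this
    -- order characterizations
    have charM : ∀ r t : {p : M // p ≠ ⊥}, (r : M) ≤ t ↔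
        ∀ s : {p : M // p ≠ ⊥}, (t : M) ≤ ocM s → (r : M) ≤ ocM s := by
      intro r t
      constructor
      · intro h s hs; exact le_trans h hs
      · intro h
        by_cases ht : ocM (t : M) = ⊥
        · exact le_trans le_top (hMtop _ ht).ge
        · have := h ⟨ocM (t : M), ht⟩ (by rw [ocM_invol])
          rwa [ocM_invol] at this
    have charL : ∀ r t : {p : L // p ≠ ⊥}, (r : L) ≤ t ↔
        ∀ s : {p : L // p ≠ ⊥}, (t : L) ≤ ocL s → (r : L) ≤ ocL s := by
      intro r t
      constructor
      · intro h s hs; exact le_trans h hs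
      · intro h
        by_cases ht : ocL (t : L) = ⊥
        · exact le_trans le_top (hLtop _ ht).ge
        · have := h ⟨ocL (t : L), ht⟩ (by rw [ocL_invol])
          rwa [ocL_invol] at this
    -- Φ is an order isomorphism on nonzero elements
    have hmono : ∀ r t : {p : M // p ≠ ⊥}, (r : M) ≤ t ↔ (Φ r : L) ≤ Φ t := by
      intro r t
      rw [charM, charL]
      constructor
      · intro h u hu
        obtain ⟨s, rfl⟩ := hΦ.2 u
        exact (horth r s).1 (h s ((horth t s).2 hu))
      · intro h s hs
        exact (horth r s).2 (h (Φ s) ((horth t s).1 hs))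
    -- Φ commutes with orthocomplementation
    have hΦoc : ∀ (p : {p : M // p ≠ ⊥}) (hp : ocM (p : M) ≠ ⊥),
        (Φ ⟨ocM (p : M), hp⟩ : L) = ocL (Φ p) := by
      intro p hp
      refine le_antisymm ?_ ?_
      · exact (horth ⟨ocM (p : M), hp⟩ p).1 le_rfl
      · by_cases h0 : ocL ((Φ p : L)) = ⊥
        · rw [h0]; exact bot_le
        · obtain ⟨s, hs⟩ := hΦ.2 ⟨ocL ((Φ p : L)), h0⟩
          have h1 : (Φ s : L) ≤ ocL (Φ p) := by rw [hs]
          have h2 : (s : M) ≤ ocM (p : M) := (horth s p).2 h1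
          have h3 : (Φ s : L) ≤ Φ ⟨ocM (p : M), hp⟩ := (hmono s ⟨ocM (p : M), hp⟩).1 h2
          rw [hs] at h3
          exact h3
    -- Φ ⊤ = ⊤
    have hΦtopval : (Φ ⟨⊤, htriv⟩ : L) = ⊤ := by
      have hLnt : (⊤ : L) ≠ ⊥ := fun h =>
        (Φ ⟨⊤, htriv⟩).2 (le_antisymm (le_top.trans h.le) bot_le)
      obtain ⟨s, hs⟩ := hΦ.2 ⟨⊤, hLnt⟩
      have : (Φ s : L) ≤ Φ ⟨⊤, htriv⟩ := (hmono s ⟨⊤, htriv⟩).1 le_top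
      rw [hs] at this
      exact le_antisymm le_top this
    -- define θ
    refine ⟨fun p => if h : p = ⊥ then ⊥ else (Φ ⟨p, h⟩ : L), ⟨?_, ?_⟩, ?_, ?_, ?_⟩
    · -- injective
      intro p q hpq
      by_cases hp : p = ⊥ <;> by_cases hq : q = ⊥ <;> simp [hp, hq] at hpq ⊢
      · exact absurd hpq.symm (Φ ⟨q, hq⟩).2
      · exact absurd hpq (Φ ⟨p, hp⟩).2
      · have : Φ ⟨p, hp⟩ = Φ ⟨q, hq⟩ := Subtype.ext hpq
        exact Subtype.mk_eq_mk.1 (hΦ.1 this)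
    · -- surjective
      intro y
      by_cases hy : y = ⊥
      · exact ⟨⊥, by simp [hy]⟩
      · obtain ⟨x, hx⟩ := hΦ.2 ⟨y, hy⟩
        refine ⟨x.1, ?_⟩
        simp only [dif_neg x.2]
        rw [show (⟨x.1, x.2⟩ : {p : M // p ≠ ⊥}) = x from rfl, hx]
    · -- order iso
      intro p q
      by_cases hp : p = ⊥
      · simp [hp]
      · by_cases hq : q = ⊥
        · subst hq
          beta_reduce
          rw [dif_neg hp, dif_pos rfl, le_bot_iff, le_bot_iff]
          exact ⟨fun h => absurd h hp, fun h => absurd h (Φ ⟨p, hp⟩).2⟩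
        · simp only [dif_neg hp, dif_neg hq]
          exact hmono ⟨p, hp⟩ ⟨q, hq⟩
    · -- orthocomplement
      intro p
      by_cases hp : p = ⊥
      · subst hp
        beta_reduce
        rw [hMocbot, dif_neg htriv, dif_pos rfl, hLocbot]
        exact hΦtopval
      · by_cases hpt : p = ⊤
        · subst hpt
          beta_reduce
          rw [hMoctop, dif_pos rfl, dif_neg htriv, hΦtopval, hLoctop]
        · have hoc : ocM p ≠ ⊥ := fun h => hpt (hMtop p h)
          simp only [dif_neg hp, dif_neg hoc]
          exact hΦoc ⟨p, hp⟩ hoc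
    · -- formula
      intro p h hp0 _
      simp only [dif_neg hp0]
      rw [hΦoc ⟨p, hp0⟩ h, ocL_invol]
end

section
/- Let L be an atomistic ortholattice with set of atoms Lᵐ, and define a ≠_L b iff a ≤ b' for a, b ∈ Lᵐ. Then the map Ξ defined by Ξ(p) := {a ∈ Lᵐ : a ≤ p} is an injective ortholattice homomorphism from L into 𝒬(Lᵐ, ≠_L): for all p, q ∈ L, Ξ(p) ∈ 𝒬(Lᵐ), Ξ(p') = Ξ(p)ᶜ, Ξ(p ∧ q) = Ξ(p) ∩ Ξ(q), and p ≤ q iff Ξ(p) ⊆ Ξ(q). If moreover L is complete, then Ξ is a bijection from L onto 𝒬(Lᵐ, ≠_L). -/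
/-- Let `L` be an atomistic ortholattice with set of atoms `Lᵐ`, where `a ≠_L b` iff
`a ≤ oc b`. Then `Ξ(p) = {a ∈ Lᵐ : a ≤ p}` is an injective ortholattice homomorphism
from `L` into `𝒬(Lᵐ, ≠_L)`. If moreover `L` is complete (every subset has a least
upper bound), then `Ξ` is a bijection from `L` onto `𝒬(Lᵐ, ≠_L)`. -/
theorem atomistic_ortholattice_embeds_in_atom_qSubsets
    {L : Type*} [Lattice L] [BoundedOrder L]
    (oc : L → L) (oc_invol : ∀ p, oc (oc p) = p) (oc_inf : ∀ p, p ⊓ oc p = ⊥)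
    (oc_anti : ∀ p q : L, q ≤ p → oc p ≤ oc q)
    (hatomistic : ∀ p : L, p ≠ ⊥ → IsLUB {a : L | IsAtom a ∧ a ≤ p} p) :
    (∀ p : L, {a : {a : L // IsAtom a} | (a : L) ≤ p}
      ∈ qSubsets (fun a b : {a : L // IsAtom a} => (a : L) ≤ oc b)) ∧
    (∀ p : L, {a : {a : L // IsAtom a} | (a : L) ≤ oc p}
      = qCompl (fun a b : {a : L // IsAtom a} => (a : L) ≤ oc b)
          {a : {a : L // IsAtom a} | (a : L) ≤ p}) ∧
    (∀ p q : L, {a : {a : L // IsAtom a} | (a : L) ≤ p ⊓ q}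
      = {a : {a : L // IsAtom a} | (a : L) ≤ p}
          ∩ {a : {a : L // IsAtom a} | (a : L) ≤ q}) ∧
    (∀ p q : L, p ≤ q ↔
      {a : {a : L // IsAtom a} | (a : L) ≤ p}
        ⊆ {a : {a : L // IsAtom a} | (a : L) ≤ q}) ∧
    ((∀ S : Set L, ∃ x : L, IsLUB S x) →
      (Function.Injective fun p : L => {a : {a : L // IsAtom a} | (a : L) ≤ p}) ∧
      ∀ S ∈ qSubsets (fun a b : {a : L // IsAtom a} => (a : L) ≤ oc b),
        ∃ p : L, S = {a : {a : L // IsAtom a} | (a : L) ≤ p}) := by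

  -- basic facts
  have oc_top : oc ⊤ = ⊥ := by
    have := oc_inf ⊤; simpa using this
  have oc_bot : oc ⊥ = ⊤ := by
    have : oc (oc ⊤) = ⊤ := oc_invol ⊤
    rw [oc_top] at this; exact this
  have le_oc_comm : ∀ a b : L, a ≤ oc b → b ≤ oc a := by
    intro a b h
    have := oc_anti _ _ h
    rw [oc_invol] at this
    exact this
  -- complement lemma
  have hcompl : ∀ p : L, {a : {a : L // IsAtom a} | (a : L) ≤ oc p}
      = qCompl (fun a b : {a : L // IsAtom a} => (a : L) ≤ oc b)
          {a : {a : L // IsAtom a} | (a : L) ≤ p} := by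
    intro p
    ext a
    constructor
    · intro ha b hb
      exact le_trans ha (oc_anti _ _ hb)
    · intro ha
      by_cases hp : p = ⊥
      · subst hp; rw [oc_bot]; exact le_top
      · have hlub := hatomistic p hp
        have hub : p ≤ oc (a : L) := by
          apply hlub.2
          intro b hb
          exact le_oc_comm _ _ (ha ⟨b, hb.1⟩ hb.2)
        have := le_oc_comm _ _ hub
        exact this
  have hmem : ∀ p : L, {a : {a : L // IsAtom a} | (a : L) ≤ p}
      ∈ qSubsets (fun a b : {a : L // IsAtom a} => (a : L) ≤ oc b) := by
    intro p
    show _ = _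
    rw [← hcompl, ← hcompl, oc_invol]
  have hord : ∀ p q : L, p ≤ q ↔
      {a : {a : L // IsAtom a} | (a : L) ≤ p}
        ⊆ {a : {a : L // IsAtom a} | (a : L) ≤ q} := by
    intro p q
    constructor
    · intro h a ha; exact le_trans ha h
    · intro h
      by_cases hp : p = ⊥
      · subst hp; exact bot_le
      · exact (hatomistic p hp).2 fun b hb => h (a := ⟨b, hb.1⟩) hb.2
  refine ⟨hmem, hcompl, ?_, hord, ?_⟩
  · intro p q; ext a; simp [le_inf_iff]
  · intro hcomplete
    constructor
    · intro p q h
      exact le_antisymm ((hord p q).2 (le_of_eq h)) ((hord q p).2 (ge_of_eq h))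
    · intro S hS
      obtain ⟨p, hp⟩ := hcomplete {a : L | ∃ h : IsAtom a, (⟨a, h⟩ : {a : L // IsAtom a}) ∈ S}
      refine ⟨p, ?_⟩
      ext a
      constructor
      · intro ha
        exact hp.1 ⟨a.2, by simpa using ha⟩
      · intro (ha : (a : L) ≤ p)
        rw [hS]
        intro b hb
        have hub : p ≤ oc (b : L) := by
          apply hp.2
          rintro c ⟨hc, hcS⟩
          exact le_oc_comm _ _ (hb ⟨c, hc⟩ hcS)
        exact le_trans ha hub
end

section
/- Let L be a complete atomic orthomodular lattice with set of atoms Lᵐ, and define a ≠_L b iff a ≤ b' for a, b ∈ Lᵐ. Then the quantum set (Lᵐ, ≠_L) is both atomic and hereditary. -/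
section Aux

variable {L : Type*} [CompleteLattice L]

/-- The set of atoms below `p`. -/
def atomsOf (p : L) : Set {a : L // IsAtom a} := {a | (a : L) ≤ p}

/-- The supremum of a set of atoms. -/
def supS (D : Set {a : L // IsAtom a}) : L := ⨆ a ∈ D, (a : L)

lemma qCompl_eq (oc : L → L) (oc_invol : ∀ p, oc (oc p) = p)
    (oc_anti : ∀ p q : L, q ≤ p → oc p ≤ oc q)
    (D : Set {a : L // IsAtom a}) :
    qCompl (fun a b : {a : L // IsAtom a} => (a : L) ≤ oc b) D = atomsOf (oc (supS D)) := by
  ext y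
  constructor
  · intro h
    have h1 : supS D ≤ oc (y : L) := by
      apply iSup₂_le
      intro z hz
      have h2 := oc_anti _ _ (h z hz)
      rw [oc_invol] at h2
      exact h2
    have h3 := oc_anti _ _ h1
    rw [oc_invol] at h3
    exact h3
  · intro h z hz
    have hz' : (z : L) ≤ supS D := le_iSup₂ (f := fun (a : {a : L // IsAtom a}) _ => (a : L)) z hz
    exact le_trans h (oc_anti _ _ hz')

lemma supS_atomsOf (oc : L → L) (oc_inf : ∀ p, p ⊓ oc p = ⊥)
    (orthomodular : ∀ p q : L, p ≤ q → q = p ⊔ (q ⊓ oc p))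
    (hatomic : ∀ p : L, p ≠ ⊥ → ∃ a : L, IsAtom a ∧ a ≤ p)
    (p : L) : supS (atomsOf p) = p := by
  set r := supS (atomsOf (L := L) p) with hr
  have hrp : r ≤ p := iSup₂_le fun a ha => ha
  have hom := orthomodular r p hrp
  have hbot : p ⊓ oc r = ⊥ := by
    by_contra h
    obtain ⟨a, ha, hle⟩ := hatomic _ h
    have h1 : a ≤ p := hle.trans inf_le_left
    have h2 : a ≤ oc r := hle.trans inf_le_right
    have h3 : a ≤ r := le_iSup₂ (f := fun (a : {a : L // IsAtom a}) _ => (a : L)) ⟨a, ha⟩ h1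
    have h4 : a ≤ r ⊓ oc r := le_inf h3 h2
    rw [oc_inf] at h4
    exact ha.1 (le_bot_iff.mp h4)
  rw [hbot, sup_bot_eq] at hom
  exact hom.symm

lemma oc_sup (oc : L → L) (oc_invol : ∀ p, oc (oc p) = p)
    (oc_anti : ∀ p q : L, q ≤ p → oc p ≤ oc q)
    (p t : L) : oc (p ⊔ oc t) = oc p ⊓ t := by
  apply le_antisymm
  · refine le_inf (oc_anti _ _ le_sup_left) ?_
    have := oc_anti _ _ (le_sup_right (a := p) (b := oc t))
    rw [oc_invol] at this
    exact this
  · have h1 : p ⊔ oc t ≤ oc (oc p ⊓ t) := by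
      apply sup_le
      · have := oc_anti _ _ (inf_le_left (a := oc p) (b := t))
        rw [oc_invol] at this
        exact this
      · exact oc_anti _ _ inf_le_right
    have h2 := oc_anti _ _ h1
    rw [oc_invol] at h2
    exact h2

lemma sandwich (oc : L → L) (oc_invol : ∀ p, oc (oc p) = p)
    (oc_inf : ∀ p, p ⊓ oc p = ⊥)
    (oc_anti : ∀ p q : L, q ≤ p → oc p ≤ oc q)
    (orthomodular : ∀ p q : L, p ≤ q → q = p ⊔ (q ⊓ oc p))
    {p t : L} (hpt : p ≤ t) : oc (oc p ⊓ t) ⊓ t = p := by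
  have hx : oc (oc p ⊓ t) = p ⊔ oc t := by
    rw [← oc_sup oc oc_invol oc_anti p t, oc_invol]
  set x := p ⊔ oc t with hxdef
  rw [hx]
  have hp_le : p ≤ x ⊓ t := le_inf le_sup_left hpt
  have hom := orthomodular p (x ⊓ t) hp_le
  have hz : (x ⊓ t) ⊓ oc p ≤ x ⊓ oc x := by
    rw [oc_sup oc oc_invol oc_anti p t]
    refine le_inf (le_trans inf_le_left inf_le_left) (le_inf ?_ ?_)
    · exact inf_le_right
    · exact le_trans inf_le_left inf_le_right
  rw [oc_inf] at hz
  have hz' : (x ⊓ t) ⊓ oc p = ⊥ := le_bot_iff.mp hz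
  rw [hz', sup_bot_eq] at hom
  exact hom

lemma atomsOf_inf (p t : L) : atomsOf p ∩ atomsOf t = atomsOf (p ⊓ t) := by
  ext a
  simp [atomsOf, le_inf_iff]

end Aux

/-- Let `L` be a complete atomic orthomodular lattice with set of atoms `Lᵐ`, and
define `a ≠_L b` iff `a ≤ oc b` for atoms `a, b`. Then the quantum set `(Lᵐ, ≠_L)`
is both atomic and hereditary. -/
theorem atom_quantum_set_atomic_and_hereditary {L : Type*} [CompleteLattice L]
    (oc : L → L) (oc_invol : ∀ p, oc (oc p) = p) (oc_inf : ∀ p, p ⊓ oc p = ⊥)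
    (oc_anti : ∀ p q : L, q ≤ p → oc p ≤ oc q)
    (orthomodular : ∀ p q : L, p ≤ q → q = p ⊔ (q ⊓ oc p))
    (hatomic : ∀ p : L, p ≠ ⊥ → ∃ a : L, IsAtom a ∧ a ≤ p) :
    (∀ a : {a : L // IsAtom a},
      qCompl (fun a b : {a : L // IsAtom a} => (a : L) ≤ oc b)
        (qCompl (fun a b : {a : L // IsAtom a} => (a : L) ≤ oc b) {a}) = {a}) ∧
    Hereditary (fun a b : {a : L // IsAtom a} => (a : L) ≤ oc b) := by
  set q := fun a b : {a : L // IsAtom a} => (a : L) ≤ oc b with hq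
  have hQC : ∀ D : Set {a : L // IsAtom a}, qCompl q D = atomsOf (oc (supS D)) :=
    qCompl_eq oc oc_invol oc_anti
  have hSA : ∀ p : L, supS (atomsOf p) = p :=
    supS_atomsOf oc oc_inf orthomodular hatomic
  -- double q-complement computation
  have hQQ : ∀ D : Set {a : L // IsAtom a}, qCompl q (qCompl q D) = atomsOf (supS D) := by
    intro D
    rw [hQC, hQC, hSA, oc_invol]
  -- atoms below an atom
  have hAtomSelf : ∀ a : {a : L // IsAtom a}, atomsOf (a : L) = {a} := by
    intro a
    ext b
    constructor
    · intro hb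
      have hb' : (b : L) ≤ (a : L) := hb
      by_cases h : (b : L) = (a : L)
      · exact Set.mem_singleton_iff.mpr (Subtype.ext h)
      · exact absurd (a.2.2 _ (lt_of_le_of_ne hb' h)) b.2.1
    · intro hb
      rw [Set.mem_singleton_iff.mp hb]
      exact le_refl _
  have hSupSingle : ∀ a : {a : L // IsAtom a}, supS {a} = (a : L) := by
    intro a
    simp [supS]
  constructor
  · intro a
    rw [hQQ, hSupSingle, hAtomSelf]
  · intro T hT S
    have hTform : T = atomsOf (supS T) := by
      have := hT
      rw [qSubsets, Set.mem_setOf_eq, hQQ] at this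
      exact this
    set t := supS T with ht
    -- common computation: for S ⊆ T with p = supS S,
    -- qCompl q (qCompl q S ∩ T) ∩ T = atomsOf p
    have key : ∀ S : Set {a : L // IsAtom a}, S ⊆ T →
        qCompl q (qCompl q S ∩ T) ∩ T = atomsOf (supS S) := by
      intro S hsub
      have hpt : supS S ≤ t := by
        apply iSup₂_le
        intro a ha
        have := hsub ha
        rw [hTform] at this
        exact this
      rw [hQC S, hTform, atomsOf_inf, hQC, hSA, atomsOf_inf,
        sandwich oc oc_invol oc_inf oc_anti orthomodular hpt]
    constructor
    · rintro ⟨hS, hsub⟩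
      refine ⟨hsub, ?_⟩
      rw [key S hsub]
      rw [qSubsets, Set.mem_setOf_eq, hQQ] at hS
      exact hS
    · rintro ⟨hsub, heq⟩
      refine ⟨?_, hsub⟩
      rw [key S hsub] at heq
      rw [qSubsets, Set.mem_setOf_eq, hQQ]
      exact heq
end

section
/- A complete atomistic ortholattice L is distributive (i.e., a Boolean algebra) if and only if any two of its atoms q-commute with one another; equivalently, if and only if for any two distinct atoms a, b of L one has a ≤ b'. -/
/-- A complete atomistic ortholattice is distributive (i.e. a Boolean algebra) if and
only if any two of its atoms q-commute with one another; equivalently, if and only if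
any two distinct atoms `a, b` satisfy `a ≤ b'`. -/
theorem complete_atomistic_ortholattice_distributive_iff_atoms_qcommute
    {L : Type*} [CompleteLattice L]
    (oc : L → L) (oc_invol : ∀ p, oc (oc p) = p) (oc_inf : ∀ p, p ⊓ oc p = ⊥)
    (oc_anti : ∀ p q : L, q ≤ p → oc p ≤ oc q)
    (hatomistic : ∀ p : L, p ≠ ⊥ → IsLUB {a : L | IsAtom a ∧ a ≤ p} p) :
    ((∀ p q r : L, p ⊓ (q ⊔ r) = (p ⊓ q) ⊔ (p ⊓ r)) ↔
      ∀ a b : L, IsAtom a → IsAtom b →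
        a ⊓ oc (a ⊓ b) ≤ oc (b ⊓ oc (a ⊓ b))) ∧
    ((∀ p q r : L, p ⊓ (q ⊔ r) = (p ⊓ q) ⊔ (p ⊓ r)) ↔
      ∀ a b : L, IsAtom a → IsAtom b → a ≠ b → a ≤ oc b) := by
  have oc_bot : oc (⊥ : L) = ⊤ := by
    refine le_antisymm le_top ?_
    calc (⊤ : L) = oc (oc ⊤) := (oc_invol ⊤).symm
    _ ≤ oc ⊥ := oc_anti _ _ bot_le
  have sup_oc : ∀ p : L, p ⊔ oc p = ⊤ := by
    intro p
    have h1 : oc (p ⊔ oc p) ≤ ⊥ := by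
      have ha := oc_anti _ _ (le_sup_left : p ≤ p ⊔ oc p)
      have hb := oc_anti _ _ (le_sup_right : oc p ≤ p ⊔ oc p)
      rw [oc_invol] at hb
      calc oc (p ⊔ oc p) ≤ p ⊓ oc p := le_inf hb ha
      _ = ⊥ := oc_inf p
    have h2 : oc (p ⊔ oc p) = ⊥ := le_bot_iff.mp h1
    calc p ⊔ oc p = oc (oc (p ⊔ oc p)) := (oc_invol _).symm
    _ = oc ⊥ := by rw [h2]
    _ = ⊤ := oc_bot
  have atomLUB : ∀ p : L, IsLUB {a : L | IsAtom a ∧ a ≤ p} p := by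
    intro p
    by_cases hp : p = ⊥
    · subst hp
      exact ⟨fun a ha => ha.2, fun b _ => bot_le⟩
    · exact hatomistic p hp
  -- distributive → q-commute (for all elements)
  have hD_qc : (∀ p q r : L, p ⊓ (q ⊔ r) = (p ⊓ q) ⊔ (p ⊓ r)) →
      ∀ a b : L, a ⊓ oc (a ⊓ b) ≤ oc (b ⊓ oc (a ⊓ b)) := by
    intro hd a b
    set c := oc (a ⊓ b) with hc
    have hxy : (a ⊓ c) ⊓ (b ⊓ c) = ⊥ := by
      refine le_bot_iff.mp ?_
      have h : (a ⊓ c) ⊓ (b ⊓ c) ≤ (a ⊓ b) ⊓ oc (a ⊓ b) :=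
        le_inf (le_inf (inf_le_left.trans inf_le_left)
          (inf_le_right.trans inf_le_left)) (inf_le_left.trans inf_le_right)
      rwa [oc_inf] at h
    have h : a ⊓ c = (a ⊓ c) ⊓ oc (b ⊓ c) := by
      have h2 := hd (a ⊓ c) (b ⊓ c) (oc (b ⊓ c))
      rw [sup_oc, inf_top_eq, hxy, bot_sup_eq] at h2
      exact h2
    rw [h]; exact inf_le_right
  -- q-commuting atoms → distinct atoms are orthogonal
  have hqc_sep : (∀ a b : L, IsAtom a → IsAtom b → a ⊓ oc (a ⊓ b) ≤ oc (b ⊓ oc (a ⊓ b))) →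
      ∀ a b : L, IsAtom a → IsAtom b → a ≠ b → a ≤ oc b := by
    intro h a b ha hb hne
    have hab : a ⊓ b = ⊥ := by
      by_contra hne'
      have hle : a ⊓ b ≤ a := inf_le_left
      have heq : a ⊓ b = a := by
        rcases lt_or_eq_of_le hle with h' | h'
        · exact absurd (ha.2 _ h') hne'
        · exact h'
      have hab' : a ≤ b := heq ▸ inf_le_right
      rcases lt_or_eq_of_le hab' with h' | h'
      · exact ha.1 (hb.2 _ h')
      · exact hne h'
    have h2 := h a b ha hb
    rw [hab, oc_bot, inf_top_eq, inf_top_eq] at h2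
    exact h2
  -- orthogonal distinct atoms → distributive
  have hsep_D : (∀ a b : L, IsAtom a → IsAtom b → a ≠ b → a ≤ oc b) →
      ∀ p q r : L, p ⊓ (q ⊔ r) = (p ⊓ q) ⊔ (p ⊓ r) := by
    intro hsep p q r
    refine le_antisymm ?_
      (sup_le (inf_le_inf_left p le_sup_left) (inf_le_inf_left p le_sup_right))
    have key : ∀ a : L, IsAtom a → a ≤ q ⊔ r → a ≤ q ∨ a ≤ r := by
      intro a ha haqr
      by_contra hcon
      push_neg at hcon
      have hq : q ≤ oc a := (atomLUB q).2 (fun b hb => hsep b a hb.1 ha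
        (fun he => hcon.1 (he ▸ hb.2)))
      have hr : r ≤ oc a := (atomLUB r).2 (fun b hb => hsep b a hb.1 ha
        (fun he => hcon.2 (he ▸ hb.2)))
      have h1 : a ≤ oc a := haqr.trans (sup_le hq hr)
      have h2 : a ≤ ⊥ := by
        rw [← oc_inf a]; exact le_inf le_rfl h1
      exact ha.1 (le_bot_iff.mp h2)
    refine (atomLUB (p ⊓ (q ⊔ r))).2 (fun a ha => ?_)
    obtain ⟨haAtom, hax⟩ := ha
    have hap : a ≤ p := hax.trans inf_le_left
    rcases key a haAtom (hax.trans inf_le_right) with h | h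
    · exact le_sup_of_le_left (le_inf hap h)
    · exact le_sup_of_le_right (le_inf hap h)
  constructor
  · exact ⟨fun hd a b _ _ => hD_qc hd a b, fun h => hsep_D (hqc_sep h)⟩
  · exact ⟨fun hd a b ha hb hne =>
      hqc_sep (fun a b _ _ => hD_qc hd a b) a b ha hb hne,
      fun h => hsep_D h⟩
end

section
/- Let L be an ortholattice. Then L is orthomodular if and only if the q-commutativity relation coincides with the commutativity relation on L, i.e. for all p, q ∈ L: p ∧ (p ∧ q)' ≤ (q ∧ (p ∧ q)')' holds if and only if p = (p ∧ q) ∨ (p ∧ q'). -/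
/-- An ortholattice `L` is orthomodular if and only if the q-commutativity relation
coincides with the commutativity relation on `L`: for all `p, q`,
`p ∧ (p ∧ q)' ≤ (q ∧ (p ∧ q)')'` holds iff `p = (p ∧ q) ∨ (p ∧ q')`. -/
theorem orthomodular_iff_qcommute_eq_commute
    {L : Type*} [Lattice L] [BoundedOrder L]
    (oc : L → L) (oc_invol : ∀ p, oc (oc p) = p) (oc_inf : ∀ p, p ⊓ oc p = ⊥)
    (oc_anti : ∀ p q : L, q ≤ p → oc p ≤ oc q) :
    (∀ p q : L, p ≤ q → q = p ⊔ (q ⊓ oc p)) ↔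
      ∀ p q : L,
        (p ⊓ oc (p ⊓ q) ≤ oc (q ⊓ oc (p ⊓ q)) ↔ p = (p ⊓ q) ⊔ (p ⊓ oc q)) := by
  have oc_bot : oc (⊥ : L) = ⊤ := by
    apply le_antisymm le_top
    have := oc_anti (oc ⊤) ⊥ bot_le
    rwa [oc_invol] at this
  have de_inf : ∀ p q : L, oc (p ⊔ q) = oc p ⊓ oc q := by
    intro p q
    apply le_antisymm (le_inf (oc_anti _ _ le_sup_left) (oc_anti _ _ le_sup_right))
    have h : p ⊔ q ≤ oc (oc p ⊓ oc q) := by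
      apply sup_le
      · have := oc_anti (oc p) (oc p ⊓ oc q) inf_le_left
        rwa [oc_invol] at this
      · have := oc_anti (oc q) (oc p ⊓ oc q) inf_le_right
        rwa [oc_invol] at this
    have := oc_anti _ _ h
    rwa [oc_invol] at this
  constructor
  · intro OM p q
    constructor
    · intro hqc
      have h1 : p = (p ⊓ q) ⊔ (p ⊓ oc (p ⊓ q)) := OM _ _ inf_le_left
      have hq : q = (p ⊓ q) ⊔ (q ⊓ oc (p ⊓ q)) := OM _ _ inf_le_right
      have hocq : oc q = oc (p ⊓ q) ⊓ oc (q ⊓ oc (p ⊓ q)) := by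
        conv_lhs => rw [hq]
        exact de_inf _ _
      have h2 : p ⊓ oc (p ⊓ q) ≤ oc q := by
        rw [hocq]; exact le_inf inf_le_right hqc
      have h3 : p ⊓ oc (p ⊓ q) ≤ p ⊓ oc q := le_inf inf_le_left h2
      apply le_antisymm
      · calc p = (p ⊓ q) ⊔ (p ⊓ oc (p ⊓ q)) := h1
          _ ≤ (p ⊓ q) ⊔ (p ⊓ oc q) := sup_le_sup_left h3 _
      · exact sup_le inf_le_left inf_le_left
    · intro hc
      have hbx : p ⊓ oc q ≤ p ⊓ oc (p ⊓ q) :=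
        le_inf inf_le_left (le_trans inf_le_right (oc_anti _ _ inf_le_right))
      have hOM := OM _ _ hbx
      have hzero : (p ⊓ oc (p ⊓ q)) ⊓ oc (p ⊓ oc q) = ⊥ := by
        apply le_antisymm _ bot_le
        have hle : (p ⊓ oc (p ⊓ q)) ⊓ oc (p ⊓ oc q) ≤
            p ⊓ (oc (p ⊓ q) ⊓ oc (p ⊓ oc q)) := by
          rw [inf_assoc]
        rw [← de_inf, ← hc] at hle
        rw [oc_inf] at hle
        exact hle
      have hx : p ⊓ oc (p ⊓ q) = p ⊓ oc q := by
        rw [hOM, hzero, sup_bot_eq]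
      rw [hx]
      calc p ⊓ oc q ≤ oc q := inf_le_right
        _ ≤ oc (q ⊓ oc (p ⊓ q)) := oc_anti _ _ inf_le_left
  · intro H p q hpq
    have hqp : q ⊓ p = p := inf_eq_right.mpr hpq
    have h := (H q p).mp ?_
    · rw [hqp] at h
      exact h
    · rw [hqp, oc_inf, oc_bot]
      exact le_top
end

section
/- Let (X, ≠q) be an atomic and hereditary quantum set and D ⊆ X. Then D belongs to 𝒬(X) and is q-central if and only if Dᶜ = X \ D. -/
/-- Two subsets `C`, `D` of a quantum set q-commute if
`C ∩ (C ∩ D)ᶜ ⊆ (D ∩ (C ∩ D)ᶜ)ᶜ`. -/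
def QCommutes {X : Type*} (q : X → X → Prop) (C D : Set X) : Prop :=
  C ∩ qCompl q (C ∩ D) ⊆ qCompl q (D ∩ qCompl q (C ∩ D))

/-- In an atomic hereditary quantum set, a subset `D` is a q-central q-subset if and
only if its q-complement equals its set-theoretic complement. -/
theorem qcentral_iff_qCompl_eq_compl {X : Type*} (q : X → X → Prop)
    (hsymm : ∀ x y, q x y → q y x) (hne : ∀ x y, q x y → x ≠ y)
    (hatom : ∀ x : X, qCompl q (qCompl q {x}) = {x})
    (hhered : Hereditary q) (D : Set X) :
    (D ∈ qSubsets q ∧ ∀ T ∈ qSubsets q, QCommutes q D T) ↔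
      qCompl q D = Set.univ \ D := by
  constructor
  · rintro ⟨hD, hcent⟩
    ext x
    simp only [Set.mem_diff, Set.mem_univ, true_and]
    constructor
    · intro hx hxD
      exact hne x x (hx x hxD) rfl
    · intro hxD z hz
      have hT : ({x} : Set X) ∈ qSubsets q := (hatom x).symm
      have hempty : D ∩ ({x} : Set X) = ∅ := by
        ext w
        simp only [Set.mem_inter_iff, Set.mem_singleton_iff, Set.mem_empty_iff_false,
          iff_false, not_and]
        rintro hw rfl
        exact hxD hw
      have huniv : qCompl q (D ∩ ({x} : Set X)) = Set.univ := by
        rw [hempty]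
        ext w
        simp [qCompl]
      have hz' : z ∈ D ∩ qCompl q (D ∩ ({x} : Set X)) := by
        rw [huniv]; exact ⟨hz, trivial⟩
      have hz2 := hcent {x} hT hz'
      have : q z x := hz2 x ⟨rfl, by rw [huniv]; trivial⟩
      exact hsymm z x this
  · intro h
    have hmem : ∀ y, y ∉ D → y ∈ qCompl q D := by
      intro y hy
      rw [h]
      exact ⟨trivial, hy⟩
    constructor
    · ext y
      constructor
      · intro hy z hz
        rw [h] at hz
        exact hsymm z y (hmem z hz.2 y hy)
      · intro hy
        by_contra hyD
        exact hne y y (hy y (hmem y hyD)) rfl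
    · intro T hT x hx y hy
      by_cases hyD : y ∈ D
      · exact hx.2 y ⟨hyD, hy.1⟩
      · exact hsymm y x (hmem y hyD x hx.1)
end

section
/- Consider the quantum set (ℝ, ≠uc) where u ≠uc v iff |u − v| ≥ 1. Let S ⊆ ℝ be nonempty and such that |x − y| < 2 for all x, y ∈ S (so S is bounded), and set x₀ := inf S and y₀ := sup S. Then Sᶜ = (−∞, x₀ − 1] ∪ [y₀ + 1, ∞) and Sᶜᶜ = [x₀, y₀]. In particular, {u}ᶜᶜ = {u} for every u ∈ ℝ, so (ℝ, ≠uc) is atomic. -/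
lemma qCompl_eq_aux (S : Set ℝ) (hS : S.Nonempty)
    (hsmall : ∀ x ∈ S, ∀ y ∈ S, |x - y| < 2) :
    qCompl (fun u v : ℝ => 1 ≤ |u - v|) S
        = Set.Iic (sInf S - 1) ∪ Set.Ici (sSup S + 1) := by
  obtain ⟨s₀, hs₀⟩ := hS
  have hbb : BddBelow S := ⟨s₀ - 2, fun z hz => by
    have := abs_lt.mp (hsmall z hz s₀ hs₀); linarith [this.1]⟩
  have hba : BddAbove S := ⟨s₀ + 2, fun z hz => by
    have := abs_lt.mp (hsmall z hz s₀ hs₀); linarith [this.2]⟩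
  ext y
  simp only [qCompl, Set.mem_setOf_eq, Set.mem_union, Set.mem_Iic, Set.mem_Ici]
  constructor
  · intro h
    by_contra hc
    push_neg at hc
    obtain ⟨h1, h2⟩ := hc
    by_cases hall : ∀ z ∈ S, z ≤ y - 1
    · have := csSup_le ⟨s₀, hs₀⟩ hall
      linarith
    · push_neg at hall
      obtain ⟨z, hz, hzgt⟩ := hall
      have hz1 : y + 1 ≤ z := by
        have hy := h z hz
        rcases abs_cases (y - z) with ⟨he, _⟩ | ⟨he, _⟩ <;> linarith
      have key : ∀ z' ∈ S, y + 1 ≤ z' := by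
        intro z' hz'
        have hd := abs_lt.mp (hsmall z hz z' hz')
        have hy := h z' hz'
        rcases abs_cases (y - z') with ⟨he, _⟩ | ⟨he, _⟩ <;> linarith [hd.2]
      have := le_csInf ⟨s₀, hs₀⟩ key
      linarith
  · intro h z hz
    have hzi : sInf S ≤ z := csInf_le hbb hz
    have hzs : z ≤ sSup S := le_csSup hba hz
    rcases h with h | h <;>
      [skip; skip] <;>
      · rcases abs_cases (y - z) with ⟨he, _⟩ | ⟨he, _⟩ <;> linarith

lemma qCompl_compl_aux (S : Set ℝ) (hS : S.Nonempty)
    (hsmall : ∀ x ∈ S, ∀ y ∈ S, |x - y| < 2) :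
    qCompl (fun u v : ℝ => 1 ≤ |u - v|)
        (qCompl (fun u v : ℝ => 1 ≤ |u - v|) S) = Set.Icc (sInf S) (sSup S) := by
  obtain ⟨s₀, hs₀⟩ := hS
  have hbb : BddBelow S := ⟨s₀ - 2, fun z hz => by
    have := abs_lt.mp (hsmall z hz s₀ hs₀); linarith [this.1]⟩
  have hba : BddAbove S := ⟨s₀ + 2, fun z hz => by
    have := abs_lt.mp (hsmall z hz s₀ hs₀); linarith [this.2]⟩
  have hle : sInf S ≤ sSup S := le_trans (csInf_le hbb hs₀) (le_csSup hba hs₀)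
  rw [qCompl_eq_aux S ⟨s₀, hs₀⟩ hsmall]
  ext y
  simp only [qCompl, Set.mem_setOf_eq, Set.mem_union, Set.mem_Iic, Set.mem_Ici,
    Set.mem_Icc]
  constructor
  · intro h
    constructor
    · by_contra hy
      push_neg at hy
      by_cases hy2 : y ≤ sInf S - 1
      · have := h y (Or.inl hy2)
        simp at this; linarith
      · push_neg at hy2
        have := h (sInf S - 1) (Or.inl le_rfl)
        rcases abs_cases (y - (sInf S - 1)) with ⟨he, _⟩ | ⟨he, _⟩ <;> linarith
    · by_contra hy
      push_neg at hy
      by_cases hy2 : sSup S + 1 ≤ y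
      · have := h y (Or.inr hy2)
        simp at this; linarith
      · push_neg at hy2
        have := h (sSup S + 1) (Or.inr le_rfl)
        rcases abs_cases (y - (sSup S + 1)) with ⟨he, _⟩ | ⟨he, _⟩ <;> linarith
  · rintro ⟨h1, h2⟩ z hz
    rcases hz with hz | hz <;>
      · rcases abs_cases (y - z) with ⟨he, _⟩ | ⟨he, _⟩ <;> linarith

/-- Consider the quantum set `(ℝ, ≠uc)` where `u ≠uc v` iff `|u - v| ≥ 1`. For a
nonempty set `S` with `|x - y| < 2` for all `x, y ∈ S`, writing `x₀ = inf S` and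
`y₀ = sup S`, one has `Sᶜ = (-∞, x₀ - 1] ∪ [y₀ + 1, ∞)` and `Sᶜᶜ = [x₀, y₀]`.
In particular `{u}ᶜᶜ = {u}` for every `u`, so `(ℝ, ≠uc)` is atomic. -/
theorem uncertainty_qCompl_of_small_set (S : Set ℝ) (hS : S.Nonempty)
    (hsmall : ∀ x ∈ S, ∀ y ∈ S, |x - y| < 2) :
    qCompl (fun u v : ℝ => 1 ≤ |u - v|) S
        = Set.Iic (sInf S - 1) ∪ Set.Ici (sSup S + 1) ∧
    qCompl (fun u v : ℝ => 1 ≤ |u - v|)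
        (qCompl (fun u v : ℝ => 1 ≤ |u - v|) S) = Set.Icc (sInf S) (sSup S) ∧
    ∀ u : ℝ, qCompl (fun u v : ℝ => 1 ≤ |u - v|)
        (qCompl (fun u v : ℝ => 1 ≤ |u - v|) {u}) = {u} := by
  refine ⟨qCompl_eq_aux S hS hsmall, qCompl_compl_aux S hS hsmall, fun u => ?_⟩
  have h := qCompl_compl_aux {u} ⟨u, rfl⟩ (by
    rintro x rfl y rfl
    simp)
  simpa using h
end
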